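/- Every automorphism of the graph 12⁹₁ preserves the 6-cycle K = a₁a₂a₃b₁b₂b₃a₁ setwise, and the automorphism group of 12⁹₁ has order at most 2. -/

import Mathlib

/-- The vertices of the graph `12⁹₁`. -/
inductive V91 : Type
  | a1 | a2 | a3 | b1 | b2 | b3 | v | w1 | w2
  deriving DecidableEq

open V91 in
instance : Fintype V91 where
  elems := {a1, a2, a3, b1, b2, b3, v, w1, w2}
  complete := by intro x; cases x <;> decide

open V91 in
/-- The graph `12⁹₁`: the 6-cycle `a₁a₂a₃b₁b₂b₃a₁`, the chords `a₁b₁`, `a₃b₃`, the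
edges `va₂`, `vb₂`, and the pendant edges `w₁a₁`, `w₂b₁` (12 edges in all; the chord
`a₂b₂` of the Möbius ladder arises through the degree-2 vertex `v`).
Here `a₁, b₁` have degree 4, `a₂, a₃, b₂, b₃` degree 3, `v` degree 2 and `w₁, w₂` degree 1. -/
def graph1291 : SimpleGraph V91 :=
  SimpleGraph.fromRel (fun x y => (x, y) ∈
    [(a1, a2), (a2, a3), (a3, b1), (b1, b2), (b2, b3), (b3, a1),
     (a1, b1), (a3, b3), (v, a2), (v, b2), (w1, a1), (w2, b1)])

/-
Automorphisms preserve degrees, and `K` is exactly the set of vertices of degree at least 3.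
An automorphism sends `a₁` to one of the two degree-4 vertices `a₁, b₁`; if it fixes `a₁`,
then every other vertex is pinned down, one after another, by its degree and its adjacencies
to the vertices already fixed (`b₁, v, w₁, w₂, a₂, b₂, a₃, b₃`). So `φ ↦ φ a₁` is injective
into a two-element set.
-/

namespace SimpleGraph

variable {V : Type*} [Fintype V] {G : SimpleGraph V} [DecidableRel G.Adj]

variable (G) in
def IsDeterminedBy (F : Finset V) (x : V) : Prop :=
  ∀ y, G.degree y = G.degree x → (∀ u ∈ F, G.Adj u y ↔ G.Adj u x) → y = x

instance [DecidableEq V] (F : Finset V) (x : V) : Decidable (G.IsDeterminedBy F x) :=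
  inferInstanceAs (Decidable (∀ _, _ → _ → _))

namespace Iso

theorem apply_eq_self_of_isDeterminedBy (φ : G ≃g G) {F : Finset V} {x : V}
    (hF : ∀ u ∈ F, φ u = u) (hx : G.IsDeterminedBy F x) : φ x = x :=
  hx (φ x) (φ.degree_eq x) fun u hu => by
    simpa only [hF u hu] using φ.map_adj_iff (v := u) (w := x)

theorem image_setOf_degree (φ : G ≃g G) (P : ℕ → Prop) :
    φ '' {x | P (G.degree x)} = {x | P (G.degree x)} := by
  ext y
  refine ⟨?_, fun hy => ⟨φ.symm y, ?_, φ.apply_symm_apply y⟩⟩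
  · rintro ⟨x, hx, rfl⟩
    simpa using hx
  · rwa [Set.mem_ofPred_eq, ← φ.degree_eq, φ.apply_symm_apply]

end Iso

theorem natCard_iso_self_le_card_degree_eq (x : V)
    (h : ∀ φ : G ≃g G, φ x = x → φ = Iso.refl) :
    Nat.card (G ≃g G) ≤ (Finset.univ.filter fun y => G.degree y = G.degree x).card := by
  let f : (G ≃g G) → {y // G.degree y = G.degree x} := fun φ => ⟨φ x, φ.degree_eq x⟩
  have hf : f.Injective := by
    intro φ ψ hφψ
    have hfix : (φ.trans ψ.symm) x = x := by
      simp only [Subtype.mk.injEq, f] at hφψ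
      simp [hφψ]
    ext y
    simpa using congr(ψ ($(h _ hfix) y))
  calc Nat.card (G ≃g G) ≤ Nat.card {y // G.degree y = G.degree x} :=
        Nat.card_le_card_of_injective f hf
    _ = _ := by rw [Nat.card_eq_fintype_card, Fintype.card_subtype]

end SimpleGraph

open SimpleGraph V91

instance : DecidableRel graph1291.Adj := fun x y =>
  decidable_of_iff' _ (SimpleGraph.fromRel_adj _ x y)

theorem graph1291_setOf_three_le_degree :
    {x | 3 ≤ graph1291.degree x} = {a1, a2, a3, b1, b2, b3} := by
  ext x
  cases x <;> decide

theorem graph1291_eq_refl_of_apply_a1 (φ : graph1291 ≃g graph1291) (h : φ a1 = a1) :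
    φ = Iso.refl := by
  have hb1 := φ.apply_eq_self_of_isDeterminedBy (F := {a1}) (x := b1) (by simp [h]) (by decide)
  have hv := φ.apply_eq_self_of_isDeterminedBy (F := ∅) (x := v) (by simp) (by decide)
  have hw1 := φ.apply_eq_self_of_isDeterminedBy (F := {a1}) (x := w1) (by simp [h]) (by decide)
  have hw2 := φ.apply_eq_self_of_isDeterminedBy (F := {b1}) (x := w2) (by simp [hb1]) (by decide)
  have ha2 := φ.apply_eq_self_of_isDeterminedBy (F := {a1, v}) (x := a2) (by simp [h, hv])
    (by decide)
  have hb2 := φ.apply_eq_self_of_isDeterminedBy (F := {b1, v}) (x := b2) (by simp [hb1, hv])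
    (by decide)
  have ha3 := φ.apply_eq_self_of_isDeterminedBy (F := {a1, a2}) (x := a3) (by simp [h, ha2])
    (by decide)
  have hb3 := φ.apply_eq_self_of_isDeterminedBy (F := {b1, b2}) (x := b3) (by simp [hb1, hb2])
    (by decide)
  ext x
  cases x <;> assumption

open V91 in
/-- Every automorphism of `12⁹₁` preserves the 6-cycle `K = a₁a₂a₃b₁b₂b₃a₁` setwise,
and the automorphism group of `12⁹₁` has order at most 2. -/
theorem stmt14 :
    (∀ φ : graph1291 ≃g graph1291,
      (fun x => φ x) '' {a1, a2, a3, b1, b2, b3} = {a1, a2, a3, b1, b2, b3}) ∧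
    Nat.card (graph1291 ≃g graph1291) ≤ 2 := by
  refine ⟨fun φ => ?_, ?_⟩
  · rw [← graph1291_setOf_three_le_degree]
    exact φ.image_setOf_degree (3 ≤ ·)
  · calc Nat.card (graph1291 ≃g graph1291)
        ≤ (Finset.univ.filter fun y => graph1291.degree y = graph1291.degree a1).card :=
          natCard_iso_self_le_card_degree_eq a1 graph1291_eq_refl_of_apply_a1
      _ = 2 := by decide
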